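/- Let n ≥ 1, μ = ‖β‖₂/√n for a nonzero β ∈ ℝⁿ, and define α_q = q − (Σ_{j≤q} β_j²)/μ² for q ∈ {1,…,n−1}, with α₀ = α_n = 0. Then λ = (μ,…,μ) and α satisfy the KKT conditions −β_j²/λ_j² + 1 + α_{j−1} − α_j = 0 for all j ∈ {1,…,n}, and α_q ≥ 0 for all q if and only if Σ_{j≤q} β_j²/q ≤ ‖β‖₂²/n for all q ∈ {1,…,n−1}. Consequently, if the latter condition holds, then inf{(1/2) Σⱼ (βⱼ²/λⱼ + λⱼ) : λ ∈ (0,∞)ⁿ, λ₁ ≥ λ₂ ≥ … ≥ λₙ} = √n ‖β‖₂. -/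

import Mathlib

/-!
With `μ = ‖β‖₂ / √n`, the multipliers `α` satisfy the stationarity conditions by construction,
and `α_q ≥ 0` is the prefix-mean condition rewritten using `μ² = ‖β‖₂² / n`. For decreasing
`λ > 0`, the tangent line of the convex function `t ↦ β_j² / t + t` at `μ` gives
`∑ (β_j² / λ_j + λ_j) ≥ ∑ (β_j² / μ + μ) + ∑ (α_j - α_{j-1}) (λ_j - μ)`.
By Abel summation, the last sum is `∑ α_q (λ_q - λ_{q+1}) ≥ 0` because `α_0 = α_n = 0`.
Hence the constant vector `μ` is the minimizer, and the minimum is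
`(‖β‖₂² / μ + n μ) / 2 = √n ‖β‖₂`.
-/

open Finset

section PrefixSum

variable {n : ℕ}

noncomputable def prefixSum (f : Fin n → ℝ) (q : ℕ) : ℝ :=
  ∑ j ∈ univ.filter (fun j : Fin n => (j : ℕ) < q), f j

@[simp]
theorem prefixSum_zero (f : Fin n → ℝ) : prefixSum f 0 = 0 := by
  simp [prefixSum]

theorem prefixSum_of_le (f : Fin n → ℝ) {q : ℕ} (hq : n ≤ q) : prefixSum f q = ∑ j, f j := by
  rw [prefixSum, filter_true_of_mem fun j _ => j.isLt.trans_le hq]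

theorem prefixSum_succ (f : Fin n → ℝ) (j : Fin n) :
    prefixSum f (j + 1) = prefixSum f j + f j := by
  have hfilter : univ.filter (fun i : Fin n => (i : ℕ) < j + 1)
      = insert j (univ.filter fun i : Fin n => (i : ℕ) < j) := by
    ext i
    simp only [mem_filter, mem_univ, true_and, mem_insert, Fin.ext_iff]
    omega
  rw [prefixSum, hfilter, sum_insert (by simp), add_comm, prefixSum]

end PrefixSum

section Multiplier

variable {n : ℕ} (b : Fin n → ℝ) (m : ℝ)

/-- The multiplier `α_q` of the constraint `λ_q ≥ λ_{q+1}` at the constant point `λ = μ`,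
written with `m = μ²`. -/
noncomputable def wedgeMultiplier (q : ℕ) : ℝ :=
  q - prefixSum b q / m

@[simp]
theorem wedgeMultiplier_zero : wedgeMultiplier b m 0 = 0 := by
  simp [wedgeMultiplier]

theorem wedgeMultiplier_kkt (j : Fin n) :
    -b j / m + 1 + wedgeMultiplier b m j - wedgeMultiplier b m (j + 1) = 0 := by
  simp only [wedgeMultiplier, prefixSum_succ]
  push_cast
  ring

theorem wedgeMultiplier_succ_sub (j : Fin n) :
    wedgeMultiplier b m (j + 1) - wedgeMultiplier b m j = 1 - b j / m := by
  linarith [wedgeMultiplier_kkt b m j, neg_div m (b j)]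

theorem wedgeMultiplier_self_of_eq_mean (hb : ∑ j, b j ≠ 0) (hm : m = (∑ j, b j) / n) :
    wedgeMultiplier b m n = 0 := by
  rw [wedgeMultiplier, prefixSum_of_le b le_rfl, hm, div_div_cancel₀ hb, sub_self]

theorem wedgeMultiplier_nonneg_iff {q : ℕ} (hq : 0 < q) (hm : 0 < m) :
    0 ≤ wedgeMultiplier b m q ↔ prefixSum b q / q ≤ m := by
  rw [wedgeMultiplier, sub_nonneg, div_le_iff₀ hm, div_le_iff₀ (by exact_mod_cast hq), mul_comm]

end Multiplier

theorem sum_sub_mul_nonneg_of_antitone {R : Type*} [CommRing R] [LinearOrder R]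
    [IsStrictOrderedRing R] {n : ℕ} (a : ℕ → R) (l : Fin n → R) (ha₀ : a 0 = 0)
    (ha : ∀ q ≤ n, 0 ≤ a q) (hl : Antitone l) (hl₀ : ∀ j, 0 ≤ l j) :
    0 ≤ ∑ j : Fin n, (a (j + 1) - a j) * l j := by
  induction n with
  | zero => simp
  | succ n ih =>
    set m := l (Fin.last n)
    -- Peel off the last index and lower every remaining `l j` by `m`.
    have hsplit : ∑ j : Fin n, (a (j + 1) - a j) * l j.castSucc
        = ∑ j : Fin n, (a (j + 1) - a j) * (l j.castSucc - m) + a n * m := by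
      have htel : ∑ j : Fin n, (a (j + 1) - a j) = a n := by
        rw [Fin.sum_univ_eq_sum_range (fun k => a (k + 1) - a k), sum_range_sub, ha₀, sub_zero]
      rw [← htel, sum_mul, ← sum_add_distrib]
      exact sum_congr rfl fun j _ => by ring
    have hrest := ih (fun j => l j.castSucc - m) (fun q hq => ha q (by omega))
      (fun i j hij => sub_le_sub_right (hl (Fin.castSucc_le_castSucc_iff.2 hij)) m)
      (fun j => sub_nonneg.2 (hl (Fin.le_last _)))
    have hlast : 0 ≤ a (n + 1) * m := mul_nonneg (ha _ le_rfl) (hl₀ _)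
    simp only [Fin.sum_univ_castSucc, Fin.val_castSucc, Fin.val_last]
    rw [hsplit]
    linarith

theorem div_add_self_tangent_le {b μ l : ℝ} (hb : 0 ≤ b) (hμ : 0 < μ) (hl : 0 < l) :
    b / μ + μ + (1 - b / μ ^ 2) * (l - μ) ≤ b / l + l := by
  have hgap : b / l + l - (b / μ + μ + (1 - b / μ ^ 2) * (l - μ))
      = b * (l - μ) ^ 2 / (l * μ ^ 2) := by
    field_simp
    ring
  have : 0 ≤ b * (l - μ) ^ 2 / (l * μ ^ 2) := by positivity
  linarith

theorem isLeast_wedgePenalty_const {n : ℕ} (b : Fin n → ℝ) {μ : ℝ} (hb : ∀ j, 0 ≤ b j)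
    (hμ : 0 < μ) (hα : ∀ q ≤ n, 0 ≤ wedgeMultiplier b (μ ^ 2) q)
    (hαn : wedgeMultiplier b (μ ^ 2) n = 0) :
    IsLeast {t : ℝ | ∃ l : Fin n → ℝ, (∀ i, 0 < l i) ∧ (∀ i j : Fin n, i ≤ j → l j ≤ l i) ∧
        t = (1 / 2) * ∑ j, (b j / l j + l j)}
      ((1 / 2) * ∑ j, (b j / μ + μ)) := by
  refine ⟨⟨fun _ => μ, fun _ => hμ, fun _ _ _ => le_rfl, rfl⟩, ?_⟩
  rintro t ⟨l, hl, hanti, rfl⟩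
  have hslope := wedgeMultiplier_succ_sub b (μ ^ 2)
  have htotal : ∑ j, (1 - b j / μ ^ 2) = 0 := by
    simp only [← hslope]
    rw [Fin.sum_univ_eq_sum_range (fun k => wedgeMultiplier b (μ ^ 2) (k + 1)
      - wedgeMultiplier b (μ ^ 2) k), sum_range_sub, hαn, wedgeMultiplier_zero, sub_zero]
  have habel : 0 ≤ ∑ j, (1 - b j / μ ^ 2) * l j := by
    simp only [← hslope]
    exact sum_sub_mul_nonneg_of_antitone _ l (wedgeMultiplier_zero b _) hα hanti
      fun j => (hl j).le
  have hsum : ∑ j, (b j / μ + μ) ≤ ∑ j, (b j / l j + l j) :=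
    calc ∑ j, (b j / μ + μ)
        ≤ ∑ j, (b j / μ + μ) + ∑ j, (1 - b j / μ ^ 2) * (l j - μ) := by
          simp only [mul_sub, sum_sub_distrib, ← sum_mul, htotal]
          linarith
      _ = ∑ j, (b j / μ + μ + (1 - b j / μ ^ 2) * (l j - μ)) := sum_add_distrib.symm
      _ ≤ ∑ j, (b j / l j + l j) :=
          sum_le_sum fun j _ => div_add_self_tangent_le (hb j) hμ (hl j)
  linarith

theorem half_sum_div_add_const_eq {n : ℕ} (b : Fin n → ℝ) (hb : 0 < ∑ j, b j) :
    (1 / 2) * ∑ j, (b j / (√(∑ j, b j) / √n) + √(∑ j, b j) / √n) = √n * √(∑ j, b j) := by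
  have hn : (0 : ℝ) < n := by
    rcases Nat.eq_zero_or_pos n with rfl | hn
    · simp at hb
    · exact_mod_cast hn
  have hr := Real.sqrt_pos.2 hb
  have hs := Real.sqrt_pos.2 hn
  have hr_sq := Real.sq_sqrt hb.le
  have hs_sq := Real.sq_sqrt hn.le
  set r := √(∑ j, b j)
  set s := √(n : ℝ)
  rw [sum_add_distrib, ← sum_div, sum_const, card_univ, Fintype.card_fin, nsmul_eq_mul,
    ← hr_sq, ← hs_sq]
  field_simp
  ring

theorem stmt_19 (n : ℕ) (β : Fin n → ℝ) (hβ : β ≠ 0) :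
    let μ : ℝ := Real.sqrt (∑ j, β j ^ 2) / Real.sqrt n
    let α : ℕ → ℝ := fun q =>
      (q : ℝ) - (∑ j ∈ Finset.univ.filter (fun j : Fin n => (j : ℕ) < q), β j ^ 2) / μ ^ 2
    (∀ j : Fin n, -(β j ^ 2) / μ ^ 2 + 1 + α (j : ℕ) - α ((j : ℕ) + 1) = 0) ∧
    (α 0 = 0 ∧ α n = 0) ∧
    ((∀ q : ℕ, 1 ≤ q → q ≤ n - 1 → 0 ≤ α q) ↔
      (∀ q : ℕ, 1 ≤ q → q ≤ n - 1 →
        (∑ j ∈ Finset.univ.filter (fun j : Fin n => (j : ℕ) < q), β j ^ 2) / (q : ℝ) ≤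
          (∑ j, β j ^ 2) / (n : ℝ))) ∧
    ((∀ q : ℕ, 1 ≤ q → q ≤ n - 1 →
        (∑ j ∈ Finset.univ.filter (fun j : Fin n => (j : ℕ) < q), β j ^ 2) / (q : ℝ) ≤
          (∑ j, β j ^ 2) / (n : ℝ)) →
      sInf {t : ℝ | ∃ l : Fin n → ℝ, (∀ i, 0 < l i) ∧
          (∀ i j : Fin n, i ≤ j → l j ≤ l i) ∧
          t = (1/2) * ∑ j, (β j ^ 2 / l j + l j)} =
        Real.sqrt n * Real.sqrt (∑ j, β j ^ 2)) := by
  intro μ α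
  obtain ⟨j₀, hj₀⟩ := Function.ne_iff.1 hβ
  have hS : 0 < ∑ j, β j ^ 2 :=
    sum_pos' (fun j _ => sq_nonneg _) ⟨j₀, mem_univ _, sq_pos_of_ne_zero hj₀⟩
  have hn : (0 : ℝ) < n := by exact_mod_cast j₀.pos
  have hμ : 0 < μ := by positivity
  have hμsq : μ ^ 2 = (∑ j, β j ^ 2) / n := by
    rw [div_pow, Real.sq_sqrt hS.le, Real.sq_sqrt hn.le]
  have hαn : α n = 0 := wedgeMultiplier_self_of_eq_mean _ _ hS.ne' hμsq
  have hα_iff : ∀ q, 1 ≤ q → (0 ≤ α q ↔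
      prefixSum (fun j => β j ^ 2) q / q ≤ (∑ j, β j ^ 2) / n) := fun q hq =>
    hμsq ▸ wedgeMultiplier_nonneg_iff _ _ hq (by positivity)
  refine ⟨wedgeMultiplier_kkt _ _, ⟨wedgeMultiplier_zero _ _, hαn⟩,
    forall₃_congr fun q hq _ => hα_iff q hq, fun hmean => ?_⟩
  have hα : ∀ q ≤ n, 0 ≤ α q := by
    intro q hq
    rcases Nat.eq_zero_or_pos q with rfl | hq₀
    · exact (wedgeMultiplier_zero _ _).ge
    rcases hq.eq_or_lt with rfl | hqn
    · exact hαn.ge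
    exact (hα_iff q hq₀).2 (hmean q hq₀ (by omega))
  rw [(isLeast_wedgePenalty_const _ (fun j => sq_nonneg _) hμ hα hαn).csInf_eq]
  exact half_sum_div_add_const_eq _ hS
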